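/- arXiv:1501.03441 — 2 statements merged into one kernel-verified Lean document; each statement's English description precedes it below -/
import Mathlib

section
/- Let q = p^e be a prime power and t ≥ 3. For any integer s with 0 < s < t, there is no natural number h such that (q^{s+1}-1)/(q-1) ≡ p^h (mod (q^t-1)/(q-1)). -/
/-!
Modulo `N = 1 + q + ⋯ + q^(t-1)` we have `q^t ≡ 1`, so writing `h = e m + b` with `b < e` gives
`p^h = q^m p^b ≡ q^a p^b` with `a = m mod t`. Multiplying the congruence `θ_s ≡ q^a p^b` by
`q^(t-a)` turns it into `∑_{j ∈ A} q^j ≡ p^b`, where `A` is the set of the `s + 1 ≥ 2` exponents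
`t - a, …, t - a + s` read modulo `t`. Such a sum is at least `q > p^b`, and it is either `N`
itself or less than `N`; neither is compatible with being congruent to `p^b ∈ (0, q)`.
-/

open Finset

theorem pow_modEq_one_geomSum (q t : ℕ) : q ^ t ≡ 1 [MOD ∑ i ∈ range t, q ^ i] := by
  refine (Int.natCast_modEq_iff.mp ?_).symm
  refine Int.modEq_iff_dvd.mpr ⟨(q : ℤ) - 1, ?_⟩
  push_cast
  rw [geom_sum_mul]

theorem pow_modEq_pow_mod_geomSum (q t m : ℕ) :
    q ^ m ≡ q ^ (m % t) [MOD ∑ i ∈ range t, q ^ i] :=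
  calc q ^ m = (q ^ t) ^ (m / t) * q ^ (m % t) := by rw [← pow_mul, ← pow_add, Nat.div_add_mod]
    _ ≡ 1 ^ (m / t) * q ^ (m % t) [MOD ∑ i ∈ range t, q ^ i] :=
      ((pow_modEq_one_geomSum q t).pow _).mul_right _
    _ = q ^ (m % t) := by rw [one_pow, one_mul]

theorem injOn_add_mod_range (c : ℕ) {n t : ℕ} (hn : n ≤ t) :
    Set.InjOn (fun i => (c + i) % t) (range n) := by
  intro i hi j hj hij
  simp only [coe_range, Set.mem_Iio] at hi hj
  have := Nat.ModEq.add_left_cancel' c hij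
  rwa [Nat.ModEq, Nat.mod_eq_of_lt (by omega), Nat.mod_eq_of_lt (by omega)] at this

theorem pow_mul_geomSum_modEq_sum_image (q c : ℕ) {n t : ℕ} (hn : n ≤ t) :
    q ^ c * ∑ i ∈ range n, q ^ i ≡
      ∑ j ∈ (range n).image (fun i => (c + i) % t), q ^ j [MOD ∑ i ∈ range t, q ^ i] := by
  rw [sum_image (injOn_add_mod_range c hn), mul_sum]
  refine Nat.ModEq.sum fun i _ => ?_
  rw [← pow_add]
  exact pow_modEq_pow_mod_geomSum q t (c + i)

theorem not_sum_pow_modEq_of_pos_of_lt {q t r : ℕ} {A : Finset ℕ} (hA : A ⊆ range t)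
    (hA₁ : 1 < #A) (hr₀ : 0 < r) (hrq : r < q) :
    ¬ ∑ j ∈ A, q ^ j ≡ r [MOD ∑ j ∈ range t, q ^ j] := by
  intro hmod
  obtain ⟨j, hjA, hj₀⟩ := exists_mem_ne hA₁ 0
  have hqS : q ≤ ∑ j ∈ A, q ^ j :=
    calc q ≤ q ^ j := Nat.le_self_pow hj₀ q
      _ ≤ ∑ j ∈ A, q ^ j := single_le_sum (fun _ _ => Nat.zero_le _) hjA
  have hSN : ∑ j ∈ A, q ^ j ≤ ∑ j ∈ range t, q ^ j := sum_le_sum_of_subset hA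
  rcases hSN.lt_or_eq with hlt | heq
  · have := hmod.eq_of_lt_of_lt hlt (by omega)
    omega
  · rw [heq, Nat.ModEq, Nat.mod_self, Nat.mod_eq_of_lt (by omega)] at hmod
    omega

theorem stmt_0_general (p e t s : ℕ) (hp : p.Prime) (he : 1 ≤ e)
    (hs0 : 0 < s) (hst : s < t) :
    ¬ ∃ h : ℕ,
      (∑ i ∈ Finset.range (s + 1), (p ^ e) ^ i) ≡ p ^ h
        [MOD ∑ i ∈ Finset.range t, (p ^ e) ^ i] := by
  rintro ⟨h, hcong⟩
  set q := p ^ e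
  set N := ∑ i ∈ range t, q ^ i
  set a := h / e % t
  set b := h % e
  have ha : a < t := Nat.mod_lt _ (by omega)
  have hpb : p ^ b < q := Nat.pow_lt_pow_right hp.one_lt (Nat.mod_lt _ (by omega))
  have hrot : q ^ (t - a) * ∑ i ∈ range (s + 1), q ^ i ≡ p ^ b [MOD N] :=
    calc q ^ (t - a) * ∑ i ∈ range (s + 1), q ^ i
        ≡ q ^ (t - a) * (q ^ a * p ^ b) [MOD N] := by
          refine (hcong.trans ?_).mul_left _
          rw [show p ^ h = q ^ (h / e) * p ^ b by rw [← pow_mul, ← pow_add, Nat.div_add_mod]]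
          exact (pow_modEq_pow_mod_geomSum q t _).mul_right _
      _ = q ^ t * p ^ b := by rw [← mul_assoc, ← pow_add, Nat.sub_add_cancel ha.le]
      _ ≡ 1 * p ^ b [MOD N] := (pow_modEq_one_geomSum q t).mul_right _
      _ = p ^ b := one_mul _
  refine not_sum_pow_modEq_of_pos_of_lt ?_ ?_ (pow_pos hp.pos b) hpb
    ((pow_mul_geomSum_modEq_sum_image q (t - a) hst).symm.trans hrot)
  · exact image_subset_iff.mpr fun i _ => mem_range.mpr (Nat.mod_lt _ (by omega))
  · rw [card_image_of_injOn (injOn_add_mod_range _ hst), card_range]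
    omega

theorem stmt_0 (p e t s : ℕ) (hp : p.Prime) (he : 1 ≤ e) (ht : 3 ≤ t)
    (hs0 : 0 < s) (hst : s < t) :
    ¬ ∃ h : ℕ,
      (∑ i ∈ Finset.range (s + 1), (p ^ e) ^ i) ≡ p ^ h
        [MOD ∑ i ∈ Finset.range t, (p ^ e) ^ i] :=
  stmt_0_general p e t s hp he hs0 hst
end

section
/- Let q be a prime power, t ≥ 3. Suppose 0 < s < t and there exists a natural number h with p^h < q^t (where q = p^e, p prime) such that θ_s ≡ p^h (mod θ_{t-1}) with θ_m = (q^{m+1}-1)/(q-1). If θ_{t-1} < p^h < q^t, then q^t / p^h < q - 1 (as rationals), i.e., q^t < p^h (q-1). -/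
open Finset

theorem stmt_13 (p e t s h : ℕ) (hp : p.Prime) (he : 1 ≤ e) (ht : 3 ≤ t)
    (hs0 : 0 < s) (hst : s < t)
    (hcong : (∑ i ∈ Finset.range (s + 1), (p ^ e) ^ i) ≡ p ^ h
      [MOD ∑ i ∈ Finset.range t, (p ^ e) ^ i])
    (hlt : p ^ h < (p ^ e) ^ t)
    (hgt : (∑ i ∈ Finset.range t, (p ^ e) ^ i) < p ^ h) :
    (p ^ e) ^ t < p ^ h * (p ^ e - 1) := by
  have hq2 : 2 ≤ p ^ e := by
    calc 2 ≤ p := hp.two_le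
    _ = p ^ 1 := (pow_one p).symm
    _ ≤ p ^ e := Nat.pow_le_pow_right hp.pos he
  have hgeom : (∑ i ∈ Finset.range t, ((p : ℤ) ^ e) ^ i) * ((p : ℤ) ^ e - 1)
      = ((p : ℤ) ^ e) ^ t - 1 := geom_sum_mul _ t
  rcases eq_or_lt_of_le hq2 with hq | hq
  · -- q = 2 : contradiction with hlt
    exfalso
    have h1 : ((p : ℤ) ^ e) = 2 := by exact_mod_cast hq.symm
    have hgt' : (∑ i ∈ Finset.range t, ((p : ℤ) ^ e) ^ i) < (p : ℤ) ^ h := by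
      exact_mod_cast hgt
    have hlt' : ((p : ℤ)) ^ h < ((p : ℤ) ^ e) ^ t := by exact_mod_cast hlt
    rw [h1] at hgt' hlt' hgeom
    omega
  · have hgt' : (∑ i ∈ Finset.range t, ((p : ℤ) ^ e) ^ i) < (p : ℤ) ^ h := by
      exact_mod_cast hgt
    have hq' : (2 : ℤ) < (p : ℤ) ^ e := by exact_mod_cast hq
    have : ((p : ℤ) ^ e) ^ t < (p : ℤ) ^ h * ((p : ℤ) ^ e - 1) := by nlinarith
    have h1 : (1 : ℕ) ≤ p ^ e := le_trans (by norm_num) hq2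
    zify [h1]
    exact_mod_cast this
end
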